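/- Define C : ℕ → ℕ by C(1) = 1, C(2) = 2, and C(n) = C(n - C(n-1)) + C(n - 1 - C(n-2)) for n ≥ 3. Then the recursion is well-defined (both arguments n - C(n-1) and n - 1 - C(n-2) lie in [1, n-1] for all n ≥ 3) and C(n+1) - C(n) ∈ {0, 1} for all n ≥ 1. -/
import Mathlib

namespace Stmt3Aux

/-- binary digit sum -/
def s2 (n : ℕ) : ℕ := (Nat.digits 2 n).sum

lemma s2_rec (n : ℕ) (h : 0 < n) : s2 n = n % 2 + s2 (n / 2) := by
  unfold s2
  rw [Nat.digits_def' (by norm_num : 1 < 2) h, List.sum_cons]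

lemma s2_two_mul (k : ℕ) : s2 (2 * k) = s2 k := by
  rcases Nat.eq_zero_or_pos k with rfl | hk
  · rfl
  · rw [s2_rec _ (by omega)]
    have e1 : 2 * k % 2 = 0 := by omega
    have e2 : 2 * k / 2 = k := by omega
    rw [e1, e2, Nat.zero_add]

lemma s2_two_mul_add_one (k : ℕ) : s2 (2 * k + 1) = s2 k + 1 := by
  rw [s2_rec _ (by omega)]
  have e1 : (2 * k + 1) % 2 = 1 := by omega
  have e2 : (2 * k + 1) / 2 = k := by omega
  rw [e1, e2]
  omega

lemma s2_le (n : ℕ) : s2 n ≤ n := by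
  induction n using Nat.strong_induction_on with
  | _ n ih =>
    rcases Nat.eq_zero_or_pos n with rfl | hn
    · simp [s2]
    · rw [s2_rec n hn]
      have := ih (n / 2) (by omega)
      omega

lemma s2_succ_le (k : ℕ) : s2 (k + 1) ≤ s2 k + 1 := by
  induction k using Nat.strong_induction_on with
  | _ k ih =>
    rcases Nat.even_or_odd k with ⟨m, hm⟩ | ⟨m, hm⟩
    · have e1 : k + 1 = 2 * m + 1 := by omega
      have e2 : k = 2 * m := by omega
      rw [e1, e2, s2_two_mul, s2_two_mul_add_one]
    · have e1 : k + 1 = 2 * (m + 1) := by omega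
      rw [e1, hm, s2_two_mul, s2_two_mul_add_one]
      have := ih m (by omega)
      omega

def g (v : ℕ) : ℕ := 2 * v - s2 v

lemma g_eq (v : ℕ) : g v + s2 v = 2 * v := by
  have := s2_le v
  unfold g
  omega

lemma g_zero : g 0 = 0 := by simp [g, s2]

lemma g_lt_succ (v : ℕ) : g v < g (v + 1) := by
  have a := g_eq v
  have b := g_eq (v + 1)
  have c := s2_succ_le v
  omega

lemma g_mono {w v : ℕ} (h : w ≤ v) : g w ≤ g v :=
  (strictMono_nat_of_lt_succ g_lt_succ).monotone h

lemma le_g (v : ℕ) : v ≤ g v := by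
  induction v with
  | zero => simp [g_zero]
  | succ v ih => have := g_lt_succ v; omega

lemma exists_le_g (n : ℕ) : ∃ v, n ≤ g v := ⟨n, le_g n⟩

def f (n : ℕ) : ℕ := Nat.find (exists_le_g n)

lemma f_spec (n : ℕ) : n ≤ g (f n) := Nat.find_spec (exists_le_g n)

lemma f_min (n w : ℕ) (h : w < f n) : g w < n := by
  have := Nat.find_min (exists_le_g n) h
  omega

lemma f_le (n : ℕ) : f n ≤ n := Nat.find_le (le_g n)

lemma f_eq (n v : ℕ) (h1 : g v < n) (h2 : n ≤ g (v + 1)) : f n = v + 1 := by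
  have hle : f n ≤ v + 1 := Nat.find_le h2
  have hgt : v < f n := by
    by_contra h
    push_neg at h
    have := le_trans (f_spec n) (g_mono h)
    omega
  omega

lemma f_pos {n : ℕ} (h : 1 ≤ n) : 1 ≤ f n := by
  by_contra h'
  push_neg at h'
  have h0 : f n = 0 := by omega
  have := f_spec n
  rw [h0, g_zero] at this
  omega

lemma s2_one : s2 1 = 1 := by rw [s2_rec 1 (by omega)]; simp [s2]

lemma g_one : g 1 = 1 := by have := g_eq 1; rw [s2_one] at this; omega

lemma g_two : g 2 = 3 := by
  have := g_eq 2
  have : s2 2 = 1 := by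
    have := s2_two_mul 1
    rw [s2_one] at this
    simpa using this
  have := g_eq 2
  omega

lemma f_one : f 1 = 1 := by
  have := f_eq 1 0 (by rw [g_zero]; omega) (by rw [g_one])
  simpa using this

lemma f_two : f 2 = 2 := by
  have := f_eq 2 1 (by rw [g_one]; omega) (by rw [g_two]; omega)
  simpa using this

/-- increments of f are 0 (only at even values) or 1 -/
lemma incr (n : ℕ) (hn : 2 ≤ n) :
    (f n = f (n - 1) ∧ 2 ∣ f n) ∨ f n = f (n - 1) + 1 := by
  have h1 : 1 ≤ f n := f_pos (by omega)
  obtain ⟨u, hu⟩ : ∃ u, f n = u + 1 := ⟨f n - 1, by omega⟩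
  have hub : g u < n := f_min n u (by omega)
  have hub2 : n ≤ g (u + 1) := by rw [← hu]; exact f_spec n
  rcases Nat.lt_or_ge (g u) (n - 1) with h | h
  · have hf1 : f (n - 1) = u + 1 := f_eq _ u h (by omega)
    left
    refine ⟨by omega, ?_⟩
    rcases Nat.even_or_odd u with ⟨w, hw⟩ | ⟨w, hw⟩
    · -- u even, so u+1 odd: contradiction since then block has size 1
      have e : u = 2 * w := by omega
      rw [e] at h hub2
      have go : g (2 * w + 1) = g (2 * w) + 1 := by
        have a := g_eq (2 * w + 1)
        have b := g_eq (2 * w)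
        have c := s2_two_mul w
        have d := s2_two_mul_add_one w
        omega
      omega
    · omega
  · -- n is a block start
    have hn1 : n = g u + 1 := by omega
    have hu1 : 1 ≤ u := by
      by_contra hcon
      push_neg at hcon
      have : u = 0 := by omega
      rw [this, g_zero] at hn1
      omega
    obtain ⟨t, ht⟩ : ∃ t, u = t + 1 := ⟨u - 1, by omega⟩
    have hlt := g_lt_succ t
    have hf1 : f (n - 1) = t + 1 := by
      apply f_eq
      · rw [ht] at hn1; omega
      · rw [ht] at hn1; omega
    right
    omega

/-- the key halving identity -/
lemma half (n : ℕ) (hn : 2 ≤ n) : f (n - f (n - 1)) = (f n + 1) / 2 := by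
  have h1 : 1 ≤ f n := f_pos (by omega)
  obtain ⟨u, hu⟩ : ∃ u, f n = u + 1 := ⟨f n - 1, by omega⟩
  have hub : g u < n := f_min n u (by omega)
  have hub2 : n ≤ g (u + 1) := by rw [← hu]; exact f_spec n
  rcases incr n hn with ⟨heq, hdvd⟩ | hsucc
  · -- f (n-1) = f n = 2w
    obtain ⟨w, hw⟩ := hdvd
    have hw1 : 1 ≤ w := by omega
    have hfn1 : f (n - 1) = u + 1 := by omega
    have hmu : g u < n - 1 := f_min (n - 1) u (by omega)
    obtain ⟨t, ht⟩ : ∃ t, u = 2 * t + 1 := ⟨w - 1, by omega⟩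
    have e1 := g_eq (u + 1)
    have e2 := g_eq u
    have e3 := g_eq w
    have e4 := g_eq t
    have s1 : s2 (u + 1) = s2 w := by rw [show u + 1 = 2 * w by omega, s2_two_mul]
    have s2' : s2 u = s2 t + 1 := by rw [ht, s2_two_mul_add_one]
    have key : f (n - f (n - 1)) = t + 1 := by
      apply f_eq
      · omega
      · rw [show t + 1 = w by omega]
        omega
    omega
  · -- n is a block start, f (n-1) = u
    have hf1 : f (n - 1) = u := by omega
    have hn1le : n - 1 ≤ g u := by
      have := f_spec (n - 1)
      rw [hf1] at this
      omega
    have hne : n = g u + 1 := by omega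
    have hu1 : 1 ≤ u := by
      have := f_pos (show 1 ≤ n - 1 by omega)
      omega
    have e2 := g_eq u
    rcases Nat.even_or_odd u with ⟨w, hw⟩ | ⟨w, hw⟩
    · -- u = 2w even, f n = 2w+1 odd
      have e : u = 2 * w := by omega
      have s1 : s2 u = s2 w := by rw [e, s2_two_mul]
      have e3 := g_eq w
      have e4 := g_eq (w + 1)
      have s3 : s2 (w + 1) ≤ s2 w + 1 := s2_succ_le w
      have key : f (n - f (n - 1)) = w + 1 := by
        apply f_eq
        · omega
        · omega
      omega
    · -- u = 2w+1 odd, f n = 2w+2 even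
      have s1 : s2 u = s2 w + 1 := by rw [hw, s2_two_mul_add_one]
      have e3 := g_eq w
      have e4 := g_eq (w + 1)
      have s3 : s2 (w + 1) ≤ s2 w + 1 := s2_succ_le w
      have key : f (n - f (n - 1)) = w + 1 := by
        apply f_eq
        · omega
        · omega
      omega

lemma C_eq (C : ℕ → ℕ) (h1 : C 1 = 1) (h2 : C 2 = 2)
    (hrec : ∀ n, 3 ≤ n → C n = C (n - C (n - 1)) + C (n - 1 - C (n - 2))) :
    ∀ n, 1 ≤ n → C n = f n := by
  intro n
  induction n using Nat.strong_induction_on with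
  | _ n ih =>
    intro hn
    by_cases hn3 : n < 3
    · interval_cases n
      · rw [h1, f_one]
      · rw [h2, f_two]
    · push_neg at hn3
      have e1 : C (n - 1) = f (n - 1) := ih (n - 1) (by omega) (by omega)
      have e2 : C (n - 2) = f (n - 2) := ih (n - 2) (by omega) (by omega)
      have hf1p : 1 ≤ f (n - 1) := f_pos (by omega)
      have hf1l : f (n - 1) ≤ n - 1 := f_le (n - 1)
      have hf2p : 1 ≤ f (n - 2) := f_pos (by omega)
      have hf2l : f (n - 2) ≤ n - 2 := f_le (n - 2)
      have step : C n = C (n - f (n - 1)) + C (n - 1 - f (n - 2)) := by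
        rw [← e1, ← e2]
        exact hrec n (by omega)
      have ea : C (n - f (n - 1)) = f (n - f (n - 1)) := ih _ (by omega) (by omega)
      have eb : C (n - 1 - f (n - 2)) = f (n - 1 - f (n - 2)) := ih _ (by omega) (by omega)
      rw [ea, eb] at step
      have ha : f (n - f (n - 1)) = (f n + 1) / 2 := half n (by omega)
      have hb : f (n - 1 - f (n - 1 - 1)) = (f (n - 1) + 1) / 2 := half (n - 1) (by omega)
      have hrw : n - 1 - 1 = n - 2 := by omega
      rw [hrw] at hb
      have hi := incr n (by omega)
      omega

end Stmt3Aux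

open Stmt3Aux in
/-- Conolly's recursion is well-defined and its solution has increments in {0,1}. -/
theorem stmt3 (C : ℕ → ℕ) (h1 : C 1 = 1) (h2 : C 2 = 2)
    (hrec : ∀ n, 3 ≤ n → C n = C (n - C (n - 1)) + C (n - 1 - C (n - 2))) :
    (∀ n, 3 ≤ n →
      (1 ≤ n - C (n - 1) ∧ n - C (n - 1) ≤ n - 1) ∧
      (1 ≤ n - 1 - C (n - 2) ∧ n - 1 - C (n - 2) ≤ n - 1)) ∧
    (∀ n, 1 ≤ n → C (n + 1) = C n ∨ C (n + 1) = C n + 1) := by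
  have hC : ∀ n, 1 ≤ n → C n = f n := C_eq C h1 h2 hrec
  constructor
  · intro n hn
    have a1 : C (n - 1) = f (n - 1) := hC _ (by omega)
    have a2 : C (n - 2) = f (n - 2) := hC _ (by omega)
    have b1 : 1 ≤ f (n - 1) := f_pos (by omega)
    have b2 : f (n - 1) ≤ n - 1 := f_le (n - 1)
    have b3 : 1 ≤ f (n - 2) := f_pos (by omega)
    have b4 : f (n - 2) ≤ n - 2 := f_le (n - 2)
    omega
  · intro n hn
    have a1 : C (n + 1) = f (n + 1) := hC _ (by omega)
    have a0 : C n = f n := hC _ hn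
    have hi := incr (n + 1) (by omega)
    have hrw : n + 1 - 1 = n := by omega
    rw [hrw] at hi
    omega
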